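/- (Factorial decay for controlled paths, bounded-variation case.) Let X : [0,T] → ℝ^d be a C^1 path, let γ ≥ 1 be a real number and set N := ⌊γ⌋, and let β := 1 + Σ_{r=2}^{∞} min(2/(r−1), 1)^2. For 0 ≤ i ≤ N let Y^{(i)} : [0,T] → L((ℝ^d)^{⊗i}, ℝ^e) be continuous functions (with L((ℝ^d)^{⊗0}, ℝ^e) identified with ℝ^e) such that: (i) there is M ≥ 0 with |Y^{(N)}_t − Y^{(N)}_s| ≤ M (∫_s^t |X'(u)| du)^{γ−N} for all 0 ≤ s ≤ t ≤ T; and (ii) for every 0 ≤ m ≤ N−1, every 0 ≤ s ≤ t ≤ T and every v ∈ (ℝ^d)^{⊗m}, ∫_s^t Y^{(m+1)}_u(X'(u) ⊗ v) du = Y^{(m)}_t(v) − Y^{(m)}_s(v). Then for every 0 ≤ m ≤ N and all 0 ≤ s ≤ t ≤ T, ‖Y^{(m)}_t − Σ_{l=0}^{N−m} Y^{(l+m)}_s(X^{l}_{s,t} ⊗ ·)‖ ≤ (M β^{N−m} / (N−m+1)!) · (∫_s^t |X'(u)| du)^{γ−m}. -/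

import Mathlib

open MeasureTheory

noncomputable section

/-- The `k`-th tensor power of `ℝ^d`, identified with `ℝ^(d^k)` with the Euclidean norm. -/
abbrev Tpow (d k : ℕ) : Type := EuclideanSpace ℝ (Fin k → Fin d)

/-- Tensor product of tensor-power vectors. -/
def tmul {d k l : ℕ} (v : Tpow d k) (w : Tpow d l) : Tpow d (k + l) :=
  WithLp.toLp 2 (fun i => v (fun j => i (Fin.castAdd l j)) * w (fun j => i (Fin.natAdd k j)))

/-- Reindexing cast between tensor powers of equal order. -/
def tcast {d k l : ℕ} (h : k = l) (v : Tpow d k) : Tpow d l :=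
  WithLp.toLp 2 (fun i => v (fun j => i (Fin.cast h j)))

/-- Tensor product `a ⊗ w` of a vector of `ℝ^d` with a `k`-tensor. -/
def consT {d k : ℕ} (a : EuclideanSpace ℝ (Fin d)) (w : Tpow d k) : Tpow d (k + 1) :=
  WithLp.toLp 2 (fun i => a (i 0) * w (fun j => i j.succ))

/-- Iterated integrals `X^k_{s,t} = ∫_{s<s₁<⋯<s_k<t} X'(s₁) ⊗ ⋯ ⊗ X'(s_k) ds₁⋯ds_k`
of a C¹ path, defined recursively: `X^{k+1}_{s,t} = ∫_s^t X^k_{s,u} ⊗ X'(u) du`. -/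
def iterInt {d : ℕ} (X : ℝ → EuclideanSpace ℝ (Fin d)) : (k : ℕ) → ℝ → ℝ → Tpow d k
  | 0, _, _ => WithLp.toLp 2 (fun _ => 1)
  | (k+1), s, t => WithLp.toLp 2 (fun i =>
      ∫ u in s..t, iterInt X k s u (fun j => i j.castSucc) * deriv X u (i (Fin.last k)))

/-- `B(w ⊗ ·)` : partial application of a linear map on `(a+b)`-tensors to a left factor `w`. -/
def leftPair {d e a b c : ℕ} (h : a + b = c)
    (B : Tpow d c →L[ℝ] EuclideanSpace ℝ (Fin e)) (w : Tpow d a) :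
    Tpow d b →L[ℝ] EuclideanSpace ℝ (Fin e) :=
  LinearMap.toContinuousLinearMap
    { toFun := fun v => B (tcast h (tmul w v))
      map_add' := fun v v' => by
        show B (tcast h (tmul w (v + v'))) = B (tcast h (tmul w v)) + B (tcast h (tmul w v'))
        have h1 : tcast h (tmul w (v + v')) = tcast h (tmul w v) + tcast h (tmul w v') :=
          PiLp.ext fun i => by simp [tcast, tmul, PiLp.add_apply, mul_add]
        rw [h1, map_add]
      map_smul' := fun c v => by
        show B (tcast h (tmul w (c • v))) = c • B (tcast h (tmul w v))
        have h1 : tcast h (tmul w (c • v)) = c • tcast h (tmul w v) :=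
          PiLp.ext fun i => by
            simp only [tcast, tmul, PiLp.smul_apply, PiLp.toLp_apply, smul_eq_mul]
            ring
        rw [h1, _root_.map_smul] }

set_option maxHeartbeats 1000000

-- basic lemmas
lemma tcast_rfl {d k : ℕ} (v : Tpow d k) : tcast rfl v = v := rfl

lemma leftPair_apply {d e a b c : ℕ} (h : a + b = c)
    (B : Tpow d c →L[ℝ] EuclideanSpace ℝ (Fin e)) (w : Tpow d a) (v : Tpow d b) :
    leftPair h B w v = B (tcast h (tmul w v)) := rfl

lemma tcast_tcast {d a b c : ℕ} (h1 : a = b) (h2 : b = c) (v : Tpow d a) :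
    tcast h2 (tcast h1 v) = tcast (h1.trans h2) v := by subst h1; subst h2; rfl

lemma tcast_self {d a : ℕ} (h : a = a) (v : Tpow d a) : tcast h v = v := rfl

lemma Ycast {d e : ℕ} (B : (i : ℕ) → Tpow d i →L[ℝ] EuclideanSpace ℝ (Fin e))
    {k l : ℕ} (h : k = l) (w : Tpow d k) : B k w = B l (tcast h w) := by subst h; rfl

lemma cont_pilp {d n : ℕ} {f : ℝ → Tpow d n} (h : ∀ i, Continuous fun u => f u i) :
    Continuous f := by
  have := (PiLp.continuous_toLp 2 (fun _ : Fin n → Fin d => ℝ)).comp (continuous_pi h)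
  exact this

lemma cont_eval {d n : ℕ} (i : Fin n → Fin d) : Continuous fun v : Tpow d n => v i :=
  (EuclideanSpace.proj (𝕜 := ℝ) i).continuous

lemma norm_tcast {d k l : ℕ} (h : k = l) (v : Tpow d k) : ‖tcast h v‖ = ‖v‖ := by subst h; rfl
lemma norm_consT {d k : ℕ} (a : EuclideanSpace ℝ (Fin d)) (w : Tpow d k) :
    ‖consT a w‖ = ‖a‖ * ‖w‖ := by
  simp only [EuclideanSpace.norm_eq]
  rw [← Real.sqrt_mul (by positivity)]
  congr 1
  rw [← Equiv.sum_comp (Fin.consEquiv (fun _ : Fin (k+1) => Fin d))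
    (fun i => ‖consT a w i‖ ^ 2), Fintype.sum_prod_type, Finset.sum_mul_sum]
  refine Finset.sum_congr rfl fun x _ => Finset.sum_congr rfl fun y _ => ?_
  have : consT a w ((Fin.consEquiv (fun _ : Fin (k+1) => Fin d)) (x, y)) = a x * w y := by
    simp only [consT, Fin.consEquiv, Equiv.coe_fn_mk]
    rw [show (Fin.cons x y : Fin (k+1) → Fin d) 0 = x from rfl]
    exact congrArg (fun z => a x * w z) (funext fun j => Fin.cons_succ (α := fun _ => Fin d) x y j)
  rw [this]
  simp [abs_mul, mul_pow]
lemma cont_eval_comp {d n : ℕ} {f : ℝ → Tpow d n} (hf : Continuous f) (i : Fin n → Fin d) :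
    Continuous fun u => f u i := (cont_eval i).comp hf

lemma cont_deriv_eval {d : ℕ} {X : ℝ → EuclideanSpace ℝ (Fin d)} (hX : Continuous (deriv X))
    (j : Fin d) : Continuous fun u => deriv X u j :=
  ((EuclideanSpace.proj (𝕜 := ℝ) j).continuous).comp hX

lemma iterInt_succ_apply {d : ℕ} (X : ℝ → EuclideanSpace ℝ (Fin d)) (l : ℕ) (s t : ℝ)
    (g : Fin (l+1) → Fin d) :
    iterInt X (l+1) s t g
      = ∫ u in s..t, iterInt X l s u (fun j => g j.castSucc) * deriv X u (g (Fin.last l)) := by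
  simp [iterInt]

lemma iterInt_cont {d : ℕ} (X : ℝ → EuclideanSpace ℝ (Fin d)) (hX : Continuous (deriv X))
    (l : ℕ) (s : ℝ) : Continuous fun t => iterInt X l s t := by
  induction l with
  | zero => exact continuous_const
  | succ l ih =>
    apply cont_pilp
    intro i
    simp only [iterInt_succ_apply]
    apply intervalIntegral.continuous_primitive
    intro a b
    exact ((cont_eval_comp ih _).mul (cont_deriv_eval hX _)).intervalIntegrable a b

lemma tmul_consT_apply {d : ℕ} {l m : ℕ} (w : Tpow d l) (a : EuclideanSpace ℝ (Fin d))
    (v : Tpow d m) (i : Fin (l + (m+1)) → Fin d) :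
    tmul w (consT a v) i
      = w (fun j => i (Fin.castAdd (m+1) j)) * (a (i (Fin.natAdd l 0))
          * v (fun j => i (Fin.natAdd l j.succ))) := rfl

lemma tmul_consT_cont {d : ℕ} (X : ℝ → EuclideanSpace ℝ (Fin d)) (hX : Continuous (deriv X))
    (l m : ℕ) (s : ℝ) (v : Tpow d m) :
    Continuous fun u => tmul (iterInt X l s u) (consT (deriv X u) v) := by
  apply cont_pilp
  intro i
  simp only [tmul_consT_apply]
  exact (cont_eval_comp (iterInt_cont X hX l s) _).mul
    ((cont_deriv_eval hX _).mul continuous_const)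
lemma key_integral {d : ℕ} (X : ℝ → EuclideanSpace ℝ (Fin d)) (hX : Continuous (deriv X))
    (l m : ℕ) (s t : ℝ) (v : Tpow d m) :
    (∫ u in s..t, tmul (iterInt X l s u) (consT (deriv X u) v))
      = tcast (by omega : (l+1)+m = l+(m+1)) (tmul (iterInt X (l+1) s t) v) := by
  ext i
  have hint : IntervalIntegrable (fun u => tmul (iterInt X l s u) (consT (deriv X u) v))
      volume s t := (tmul_consT_cont X hX l m s v).intervalIntegrable s t
  have swap : (∫ u in s..t, tmul (iterInt X l s u) (consT (deriv X u) v)) i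
      = ∫ u in s..t, tmul (iterInt X l s u) (consT (deriv X u) v) i := by
    exact ((EuclideanSpace.proj (𝕜 := ℝ) i).intervalIntegral_comp_comm hint).symm
  rw [swap]
  have hi : ∀ u, tmul (iterInt X l s u) (consT (deriv X u) v) i
      = (iterInt X l s u (fun j => i (Fin.castAdd (m+1) j))
          * deriv X u (i (Fin.natAdd l 0)))
        * v (fun j => i (Fin.natAdd l j.succ)) := by
    intro u
    rw [tmul_consT_apply]
    ring
  rw [intervalIntegral.integral_congr (fun u _ => hi u), intervalIntegral.integral_mul_const]
  have hR : tcast (by omega : (l+1)+m = l+(m+1)) (tmul (iterInt X (l+1) s t) v) i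
      = iterInt X (l+1) s t (fun j => i (Fin.cast (by omega) (Fin.castAdd m j)))
        * v (fun j => i (Fin.cast (by omega) (Fin.natAdd (l+1) j))) := rfl
  rw [hR, iterInt_succ_apply]
  congr 1
  refine congrArg v (funext fun j => congrArg i (Fin.ext ?_))
  simp only [Fin.coe_cast, Fin.coe_natAdd, Fin.val_succ]
  omega
lemma integral_rpow_deriv {f : ℝ → ℝ} (hf : Continuous f) (hfpos : ∀ u, 0 ≤ f u)
    {θ : ℝ} (hθ : 0 ≤ θ) (s t : ℝ) :
    ∫ u in s..t, (∫ x in s..u, f x) ^ θ * f u = (∫ x in s..t, f x) ^ (θ+1) / (θ+1) := by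
  set g : ℝ → ℝ := fun u => ∫ x in s..u, f x with hg
  have hgc : Continuous g := intervalIntegral.continuous_primitive (fun a b => hf.intervalIntegrable a b) s
  have hgd : ∀ u, HasDerivAt g (f u) u := fun u =>
    intervalIntegral.integral_hasDerivAt_right (hf.intervalIntegrable s u)
      hf.stronglyMeasurable.stronglyMeasurableAtFilter hf.continuousAt
  have hpow : Continuous fun u => g u ^ θ := by
    rw [continuous_iff_continuousAt]
    exact fun u => (Real.continuousAt_rpow_const (g u) θ (Or.inr hθ)).comp hgc.continuousAt
  have hii : IntervalIntegrable (fun u => g u ^ θ * f u) volume s t :=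
    (hpow.mul hf).intervalIntegrable s t
  have hF : ∀ u ∈ Set.uIcc s t, HasDerivAt (fun u => g u ^ (θ+1) / (θ+1))
      (g u ^ θ * f u) u := by
    intro u _
    have h1 : HasDerivAt (fun u => g u ^ (θ+1)) (f u * (θ+1) * g u ^ (θ+1-1)) u :=
      (hgd u).rpow_const (Or.inr (by linarith))
    have h2 := h1.div_const (θ+1)
    have : f u * (θ+1) * g u ^ (θ+1-1) / (θ+1) = g u ^ θ * f u := by
      rw [add_sub_cancel_right]
      field_simp
    rwa [this] at h2
  have := intervalIntegral.integral_eq_sub_of_hasDerivAt hF hii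
  rw [this]
  simp [hg, intervalIntegral.integral_same, Real.zero_rpow (by linarith : θ + 1 ≠ 0)]

lemma beta_ge_two (β : ℝ) (hβ : β = 1 + ∑' m : ℕ, (min (2 / ((m : ℝ) + 1)) 1) ^ 2) :
    2 ≤ β := by
  have hg4 : Summable (fun m : ℕ => 4 * (1 / ((m:ℝ)+1) ^ 2)) := by
    apply Summable.mul_left
    have := Real.summable_one_div_nat_pow.mpr (le_refl 2)
    have h := (summable_nat_add_iff 1).mpr this
    convert h using 2 with m
    · rfl
    push_cast
    ring
  have hsum : Summable fun m : ℕ => (min (2 / ((m : ℝ) + 1)) 1) ^ 2 := by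
    apply Summable.of_nonneg_of_le (fun m => by positivity) _ hg4
    · intro m
      have h1 : (0:ℝ) < (m:ℝ) + 1 := by positivity
      have h2 : min (2 / ((m : ℝ) + 1)) 1 ≤ 2 / ((m:ℝ)+1) := min_le_left _ _
      have h3 : (0:ℝ) ≤ min (2 / ((m : ℝ) + 1)) 1 := le_min (by positivity) one_pos.le
      calc (min (2 / ((m : ℝ) + 1)) 1) ^ 2 ≤ (2 / ((m:ℝ)+1)) ^ 2 := by
            apply pow_le_pow_left₀ h3 h2
        _ = 4 * (1 / ((m:ℝ)+1) ^ 2) := by field_simp; ring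
  have hpart : (∑ m ∈ Finset.range 1, (min (2 / ((m : ℝ) + 1)) 1) ^ 2)
      ≤ ∑' m : ℕ, (min (2 / ((m : ℝ) + 1)) 1) ^ 2 :=
    Summable.sum_le_tsum _ (fun m _ => by positivity) hsum
  simp only [Finset.sum_range_one, Nat.cast_zero, zero_add] at hpart
  rw [hβ]
  have : min (2 / (1:ℝ)) 1 = 1 := by norm_num
  rw [this] at hpart
  nlinarith

lemma Ycast' {d e : ℕ} (Y : (i : ℕ) → ℝ → (Tpow d i →L[ℝ] EuclideanSpace ℝ (Fin e)))
    {k l : ℕ} (h : k = l) (s : ℝ) (w : Tpow d k) : Y k s w = Y l s (tcast h w) := by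
  subst h; rfl

lemma tmul_one_tcast {d m : ℕ} (X : ℝ → EuclideanSpace ℝ (Fin d)) (s t : ℝ)
    (v : Tpow d m) (h : 0 + m = m) :
    tcast h (tmul (iterInt X 0 s t) v) = v := by
  ext i
  show (1:ℝ) * v (fun j => i (Fin.cast h (Fin.natAdd 0 j))) = v i
  rw [one_mul]
  exact congrArg v (funext fun j => congrArg i (Fin.ext (by simp [Fin.natAdd])))

lemma consT_cont {d m : ℕ} {X : ℝ → EuclideanSpace ℝ (Fin d)} (hc : Continuous (deriv X))
    (v : Tpow d m) : Continuous fun u => consT (deriv X u) v := by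
  apply cont_pilp; intro i
  have h : (fun u => consT (deriv X u) v i)
      = fun u => deriv X u (i 0) * v (fun j => i j.succ) := rfl
  rw [h]
  exact (cont_deriv_eval hc _).mul continuous_const

/-- **Factorial decay for controlled paths, bounded-variation case.**
Let `X` be a C¹ path, `γ ≥ 1`, `N = ⌊γ⌋`, and `β = 1 + Σ_{r=2}^∞ min(2/(r−1),1)²`
(the series indexed by `r = m+2`). Let `Y⁽ⁱ⁾ : [0,T] → L((ℝ^d)^{⊗i}, ℝ^e)` (`0 ≤ i ≤ N`)
be continuous, with `|Y⁽ᴺ⁾_t − Y⁽ᴺ⁾_s| ≤ M (∫_s^t |X'|)^{γ−N}` and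
`∫_s^t Y⁽ᵐ⁺¹⁾_u(X'(u) ⊗ v) du = Y⁽ᵐ⁾_t(v) − Y⁽ᵐ⁾_s(v)` for `0 ≤ m ≤ N−1`. Then for all
`0 ≤ m ≤ N` and `0 ≤ s ≤ t ≤ T`:
`‖Y⁽ᵐ⁾_t − Σ_{l=0}^{N−m} Y⁽ˡ⁺ᵐ⁾_s(X^l_{s,t} ⊗ ·)‖
  ≤ (M β^{N−m} / (N−m+1)!) (∫_s^t |X'|)^{γ−m}`. -/
theorem controlled_path_factorial_decay {d e : ℕ} (T : ℝ)
    (X : ℝ → EuclideanSpace ℝ (Fin d)) (hX : ContDiff ℝ 1 X)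
    (γ : ℝ) (hγ : 1 ≤ γ) (N : ℕ) (hN : N = ⌊γ⌋₊)
    (β : ℝ) (hβ : β = 1 + ∑' m : ℕ, (min (2 / ((m : ℝ) + 1)) 1) ^ 2)
    (Y : (i : ℕ) → ℝ → (Tpow d i →L[ℝ] EuclideanSpace ℝ (Fin e)))
    (hYcont : ∀ i ≤ N, ContinuousOn (Y i) (Set.Icc (0 : ℝ) T))
    (M : ℝ) (hM : 0 ≤ M)
    (htop : ∀ s t : ℝ, 0 ≤ s → s ≤ t → t ≤ T →
      ‖Y N t - Y N s‖ ≤ M * (∫ u in s..t, ‖deriv X u‖) ^ (γ - (N : ℝ)))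
    (hftc : ∀ m : ℕ, m < N → ∀ s t : ℝ, 0 ≤ s → s ≤ t → t ≤ T → ∀ v : Tpow d m,
      ∫ u in s..t, Y (m + 1) u (consT (deriv X u) v) = Y m t v - Y m s v) :
    ∀ m ≤ N, ∀ s t : ℝ, 0 ≤ s → s ≤ t → t ≤ T →
      ‖Y m t - ∑ l ∈ Finset.range (N - m + 1),
          leftPair rfl (Y (l + m) s) (iterInt X l s t)‖
        ≤ M * β ^ (N - m) / (Nat.factorial (N - m + 1) : ℝ)
            * (∫ u in s..t, ‖deriv X u‖) ^ (γ - (m : ℝ)) := by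
  have hc : Continuous (deriv X) := hX.continuous_deriv le_rfl
  have hcn : Continuous fun u => ‖deriv X u‖ := hc.norm
  have hγ0 : (0:ℝ) ≤ γ := le_trans zero_le_one hγ
  have hNγ : (N:ℝ) ≤ γ := by rw [hN]; exact Nat.floor_le hγ0
  have hβ2 : (2:ℝ) ≤ β := beta_ge_two β hβ
  have hβ0 : (0:ℝ) < β := lt_of_lt_of_le two_pos hβ2
  suffices H : ∀ k, ∀ m, m + k = N → ∀ s t : ℝ, 0 ≤ s → s ≤ t → t ≤ T →
      ‖Y m t - ∑ l ∈ Finset.range (k + 1),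
          leftPair rfl (Y (l + m) s) (iterInt X l s t)‖
        ≤ M * β ^ k / (Nat.factorial (k + 1) : ℝ)
            * (∫ u in s..t, ‖deriv X u‖) ^ (γ - (m : ℝ)) by
    intro m hm s t hs hst ht
    have h1 : m + (N - m) = N := by omega
    have h2 : N - m + 1 = (N - m) + 1 := rfl
    exact H (N - m) m h1 s t hs hst ht
  intro k
  induction k with
  | zero =>
    intro m hm s t hs hst ht
    have hmN : m = N := by omega
    subst hmN
    rw [Finset.sum_range_one]
    have he : leftPair rfl (Y (0 + m) s) (iterInt X 0 s t) = Y m s := by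
      ext v
      rw [leftPair_apply, tcast_rfl, Ycast' Y (Nat.zero_add m) s, tmul_one_tcast]
    rw [he]
    have h := htop s t hs hst ht
    calc ‖Y m t - Y m s‖ ≤ M * (∫ u in s..t, ‖deriv X u‖) ^ (γ - (m : ℝ)) := h
      _ = M * β ^ 0 / (Nat.factorial (0 + 1) : ℝ)
            * (∫ u in s..t, ‖deriv X u‖) ^ (γ - (m : ℝ)) := by norm_num
  | succ k IH =>
    intro m hm s t hs hst ht
    have hmN : m < N := by omega
    have hm1 : (m + 1) + k = N := by omega
    have hr : ((m:ℝ) + ((k:ℝ) + 1)) = (N:ℝ) := by exact_mod_cast congrArg (Nat.cast (R := ℝ)) hm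
    have hk0 : (0:ℝ) ≤ (k:ℝ) := Nat.cast_nonneg k
    have hθ0 : (0:ℝ) ≤ γ - ((m:ℝ) + 1) := by linarith
    have hk1 : (k:ℝ) + 1 ≤ γ - (m:ℝ) := by linarith
    have hγm : (0:ℝ) < γ - (m:ℝ) := by linarith
    have hIccsub : Set.Icc s t ⊆ Set.Icc (0:ℝ) T := Set.Icc_subset_Icc hs ht
    have hYm1 : ContinuousOn (Y (m+1)) (Set.Icc (0:ℝ) T) := hYcont (m+1) (by omega)
    set S : ℝ → (Tpow d (m+1) →L[ℝ] EuclideanSpace ℝ (Fin e)) :=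
      fun u => Y (m+1) u - ∑ l ∈ Finset.range (k+1),
        leftPair rfl (Y (l + (m+1)) s) (iterInt X l s u) with hS
    have hSnorm : ∀ u ∈ Set.Icc s t, ‖S u‖ ≤ M * β ^ k / (Nat.factorial (k+1) : ℝ)
        * (∫ x in s..u, ‖deriv X x‖) ^ (γ - ((m:ℝ)+1)) := by
      intro u hu
      have h := IH (m+1) hm1 s u hs hu.1 (le_trans hu.2 ht)
      push_cast at h
      exact h
    have hω0 : 0 ≤ ∫ u in s..t, ‖deriv X u‖ :=
      intervalIntegral.integral_nonneg hst (fun u _ => norm_nonneg _)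
    have hωc : Continuous fun u => ∫ x in s..u, ‖deriv X x‖ :=
      intervalIntegral.continuous_primitive (fun a b => hcn.intervalIntegrable a b) s
    have hpowc : Continuous fun u => (∫ x in s..u, ‖deriv X x‖) ^ (γ - ((m:ℝ)+1)) :=
      continuous_iff_continuousAt.mpr fun u =>
        (Real.continuousAt_rpow_const _ _ (Or.inr hθ0)).comp hωc.continuousAt
    -- key identity
    have hkey : ∀ v : Tpow d m,
        (Y m t - ∑ l ∈ Finset.range (k + 1 + 1),
            leftPair rfl (Y (l + m) s) (iterInt X l s t)) v
          = ∫ u in s..t, S u (consT (deriv X u) v) := by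
      intro v
      have hgcont : ∀ l : ℕ, Continuous fun u =>
          (Y (l + (m+1)) s) (tmul (iterInt X l s u) (consT (deriv X u) v)) :=
        fun l => (Y (l + (m+1)) s).continuous.comp (tmul_consT_cont X hc l m s v)
      have hi1 : IntervalIntegrable (fun u => Y (m+1) u (consT (deriv X u) v)) volume s t := by
        apply ContinuousOn.intervalIntegrable
        rw [Set.uIcc_of_le hst]
        exact (hYm1.mono hIccsub).clm_apply (consT_cont hc v).continuousOn
      have hi2 : ∀ l ∈ Finset.range (k+1), IntervalIntegrable
          (fun u => (Y (l + (m+1)) s) (tmul (iterInt X l s u) (consT (deriv X u) v)))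
          volume s t := fun l _ => (hgcont l).intervalIntegrable s t
      have e1 : ∫ u in s..t, S u (consT (deriv X u) v)
          = (∫ u in s..t, Y (m+1) u (consT (deriv X u) v))
            - ∑ l ∈ Finset.range (k+1), ∫ u in s..t,
                (Y (l + (m+1)) s) (tmul (iterInt X l s u) (consT (deriv X u) v)) := by
        rw [show (fun u => S u (consT (deriv X u) v))
            = fun u => Y (m+1) u (consT (deriv X u) v)
              - ∑ l ∈ Finset.range (k+1),
                  (Y (l + (m+1)) s) (tmul (iterInt X l s u) (consT (deriv X u) v)) from
          funext fun u => by
            simp [hS, ContinuousLinearMap.sub_apply, ContinuousLinearMap.sum_apply,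
              leftPair_apply, tcast_rfl]]
        have hsum : IntervalIntegrable (fun u => ∑ l ∈ Finset.range (k+1),
            (Y (l + (m+1)) s) (tmul (iterInt X l s u) (consT (deriv X u) v))) volume s t := by
          have h := IntervalIntegrable.sum (μ := volume) (Finset.range (k+1)) hi2
          have hfs : (∑ l ∈ Finset.range (k+1), fun u =>
              (Y (l + (m+1)) s) (tmul (iterInt X l s u) (consT (deriv X u) v)))
              = fun u => ∑ l ∈ Finset.range (k+1),
                  (Y (l + (m+1)) s) (tmul (iterInt X l s u) (consT (deriv X u) v)) := by
            funext u
            simp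
          rwa [hfs] at h
        rw [intervalIntegral.integral_sub hi1 hsum]
        rw [intervalIntegral.integral_finset_sum hi2]
      have e2 : (∫ u in s..t, Y (m+1) u (consT (deriv X u) v)) = Y m t v - Y m s v :=
        hftc m hmN s t hs hst ht v
      have e3 : ∀ l : ℕ, (∫ u in s..t,
            (Y (l + (m+1)) s) (tmul (iterInt X l s u) (consT (deriv X u) v)))
          = (leftPair rfl (Y (l + 1 + m) s) (iterInt X (l+1) s t)) v := by
        intro l
        rw [(Y (l + (m+1)) s).intervalIntegral_comp_comm
          ((tmul_consT_cont X hc l m s v).intervalIntegrable s t)]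
        rw [key_integral X hc l m s t v]
        rw [Ycast' Y (show l + (m+1) = (l+1) + m by omega) s]
        rw [tcast_tcast, tcast_self]
        rw [leftPair_apply, tcast_rfl]
      have e4 : ∑ l ∈ Finset.range (k + 1 + 1),
          (leftPair rfl (Y (l + m) s) (iterInt X l s t)) v
          = ∑ l ∈ Finset.range (k + 1),
              (leftPair rfl (Y (l + 1 + m) s) (iterInt X (l+1) s t)) v
            + Y m s v := by
        rw [Finset.sum_range_succ'
          (fun l => (leftPair rfl (Y (l + m) s) (iterInt X l s t)) v) (k+1)]
        congr 1
        rw [leftPair_apply, tcast_rfl, Ycast' Y (Nat.zero_add m) s, tmul_one_tcast]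
      rw [e1, e2]
      simp only [e3]
      simp only [ContinuousLinearMap.sub_apply, ContinuousLinearMap.sum_apply]
      rw [e4]
      abel
    -- norm bound
    have hC0 : 0 ≤ M * β ^ (k+1) / (Nat.factorial (k+1+1) : ℝ)
        * (∫ u in s..t, ‖deriv X u‖) ^ (γ - (m:ℝ)) := by
      apply mul_nonneg
      · apply div_nonneg (mul_nonneg hM (pow_nonneg hβ0.le _)) (by positivity)
      · exact Real.rpow_nonneg hω0 _
    apply ContinuousLinearMap.opNorm_le_bound _ hC0
    intro v
    rw [hkey v]
    have hscont : ContinuousOn (fun u => S u (consT (deriv X u) v)) (Set.Icc s t) := by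
      have hrw : (fun u => S u (consT (deriv X u) v)) = fun u =>
          Y (m+1) u (consT (deriv X u) v)
          - ∑ l ∈ Finset.range (k+1),
              (Y (l + (m+1)) s) (tmul (iterInt X l s u) (consT (deriv X u) v)) :=
        funext fun u => by
          simp [hS, ContinuousLinearMap.sub_apply, ContinuousLinearMap.sum_apply,
            leftPair_apply, tcast_rfl]
      rw [hrw]
      apply ContinuousOn.sub
      · exact (hYm1.mono hIccsub).clm_apply (consT_cont hc v).continuousOn
      · exact (continuous_finset_sum _ (fun l _ =>
          (Y (l + (m+1)) s).continuous.comp (tmul_consT_cont X hc l m s v))).continuousOn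
    have int_a : IntervalIntegrable (fun u => ‖S u (consT (deriv X u) v)‖) volume s t := by
      apply ContinuousOn.intervalIntegrable
      rw [Set.uIcc_of_le hst]
      exact hscont.norm
    have int_b : IntervalIntegrable (fun u => (M * β ^ k / (Nat.factorial (k+1) : ℝ) * ‖v‖)
        * ((∫ x in s..u, ‖deriv X x‖) ^ (γ - ((m:ℝ)+1)) * ‖deriv X u‖)) volume s t :=
      (continuous_const.mul (hpowc.mul hcn)).intervalIntegrable s t
    calc ‖∫ u in s..t, S u (consT (deriv X u) v)‖
        ≤ ∫ u in s..t, ‖S u (consT (deriv X u) v)‖ :=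
          intervalIntegral.norm_integral_le_integral_norm hst
      _ ≤ ∫ u in s..t, (M * β ^ k / (Nat.factorial (k+1) : ℝ) * ‖v‖)
            * ((∫ x in s..u, ‖deriv X x‖) ^ (γ - ((m:ℝ)+1)) * ‖deriv X u‖) := by
          apply intervalIntegral.integral_mono_on hst int_a int_b
          intro u hu
          calc ‖S u (consT (deriv X u) v)‖
              ≤ ‖S u‖ * ‖consT (deriv X u) v‖ := (S u).le_opNorm _
            _ = ‖S u‖ * (‖deriv X u‖ * ‖v‖) := by rw [norm_consT]
            _ ≤ (M * β ^ k / (Nat.factorial (k+1) : ℝ)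
                  * (∫ x in s..u, ‖deriv X x‖) ^ (γ - ((m:ℝ)+1)))
                * (‖deriv X u‖ * ‖v‖) := by
                apply mul_le_mul_of_nonneg_right (hSnorm u hu) (by positivity)
            _ = (M * β ^ k / (Nat.factorial (k+1) : ℝ) * ‖v‖)
                * ((∫ x in s..u, ‖deriv X x‖) ^ (γ - ((m:ℝ)+1)) * ‖deriv X u‖) := by
                ring
      _ = (M * β ^ k / (Nat.factorial (k+1) : ℝ) * ‖v‖)
            * ((∫ u in s..t, ‖deriv X u‖) ^ (γ - (m:ℝ)) / (γ - (m:ℝ))) := by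
          rw [intervalIntegral.integral_const_mul,
            integral_rpow_deriv hcn (fun u => norm_nonneg _) hθ0 s t]
          rw [show γ - ((m:ℝ)+1) + 1 = γ - (m:ℝ) by ring]
      _ ≤ M * β ^ (k+1) / (Nat.factorial (k+1+1) : ℝ)
            * (∫ u in s..t, ‖deriv X u‖) ^ (γ - (m:ℝ)) * ‖v‖ := by
          have hW : 0 ≤ (∫ u in s..t, ‖deriv X u‖) ^ (γ - (m:ℝ)) :=
            Real.rpow_nonneg hω0 _
          have hF : (0:ℝ) < (Nat.factorial (k+1) : ℝ) := by
            exact_mod_cast Nat.factorial_pos (k+1)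
          have hfact : (Nat.factorial (k+1+1) : ℝ)
              = ((k:ℝ)+2) * (Nat.factorial (k+1) : ℝ) := by
            rw [show k+1+1 = (k+1)+1 from rfl, Nat.factorial_succ]
            push_cast
            ring
          have hineq : M * β ^ k / (Nat.factorial (k+1) : ℝ) / (γ - (m:ℝ))
              ≤ M * β ^ (k+1) / (Nat.factorial (k+1+1) : ℝ) := by
            rw [div_div, hfact, pow_succ]
            rw [div_le_div_iff₀ (by positivity) (by positivity)]
            have hA : 0 ≤ M * β ^ k * (Nat.factorial (k+1) : ℝ) :=
              mul_nonneg (mul_nonneg hM (pow_nonneg hβ0.le _)) hF.le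
            have hB : (k:ℝ) + 2 ≤ β * (γ - (m:ℝ)) := by nlinarith
            nlinarith [mul_le_mul_of_nonneg_left hB hA]
          calc (M * β ^ k / (Nat.factorial (k+1) : ℝ) * ‖v‖)
                * ((∫ u in s..t, ‖deriv X u‖) ^ (γ - (m:ℝ)) / (γ - (m:ℝ)))
              = (M * β ^ k / (Nat.factorial (k+1) : ℝ) / (γ - (m:ℝ)))
                * (∫ u in s..t, ‖deriv X u‖) ^ (γ - (m:ℝ)) * ‖v‖ := by ring
            _ ≤ M * β ^ (k+1) / (Nat.factorial (k+1+1) : ℝ)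
                * (∫ u in s..t, ‖deriv X u‖) ^ (γ - (m:ℝ)) * ‖v‖ := by
                apply mul_le_mul_of_nonneg_right _ (norm_nonneg v)
                exact mul_le_mul_of_nonneg_right hineq hW

end
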